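/- Let α ∈ (0,1) and σ ∈ [0,1). For each k ∈ ℕ, let W^k ∈ ℝ^{N×N} be a symmetric doubly stochastic matrix satisfying ‖(W^k ⊗ I_N)u‖ ≤ σ‖u‖ for every u = (u_1,…,u_N) ∈ (ℝ^N)^N with Σ_i u_i = 0, and let m̂^k ∈ (ℝ^N)^N and Φ^k = (φ^k,…,φ^k) where φ^k = (1/N) Σ_{i=1}^N m̂_i^k. Define M^k : (ℝ^N)^N → (ℝ^N)^N by M^k(x) = (1−α)(W^k ⊗ I_N)x + α m̂^k, and let z̄^k be the unique fixed point of M^k. Assume there exist δ ≥ 0 and R ≥ 0 with ‖z̄^{k+1} − z̄^k‖ ≤ δ and ‖m̂^k − Φ^k‖ ≤ R for all k. Then for any x^0 ∈ (ℝ^N)^N, the iterates x^{k+1} = M^k(x^k) satisfy limsup_{k→∞} ‖x^k − Φ^k‖ ≤ δ/α + αR/(1 − (1−α)σ). -/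

import Mathlib

set_option maxHeartbeats 1000000

/-- The stacked space `(ℝ^N)^N` with the Euclidean norm `‖x‖² = Σ_i ‖x_i‖²`. -/
abbrev Blk (N : ℕ) := PiLp 2 (fun _ : Fin N => EuclideanSpace ℝ (Fin N))

/-- The operator `W ⊗ I_N` acting blockwise on `(ℝ^N)^N`:
`((W ⊗ I_N)x)_i = Σ_j w_{ij} x_j`. -/
noncomputable def blockOp {N : ℕ} (W : Matrix (Fin N) (Fin N) ℝ) (x : Blk N) : Blk N :=
  (WithLp.equiv 2 ((_ : Fin N) → EuclideanSpace ℝ (Fin N))).symm fun i => ∑ j, W i j • x j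

lemma blockOp_apply {N : ℕ} (W : Matrix (Fin N) (Fin N) ℝ) (x : Blk N) (i : Fin N) :
    blockOp W x i = ∑ j, W i j • x j := rfl

lemma blockOp_sub {N : ℕ} (W : Matrix (Fin N) (Fin N) ℝ) (x y : Blk N) :
    blockOp W (x - y) = blockOp W x - blockOp W y := by
  refine PiLp.ext fun i => ?_
  simp only [blockOp_apply, PiLp.sub_apply, smul_sub, Finset.sum_sub_distrib]

lemma blockOp_of_const {N : ℕ} (W : Matrix (Fin N) (Fin N) ℝ)
    (hrow : ∀ i, ∑ j, W i j = 1) (v : Blk N) (c : EuclideanSpace ℝ (Fin N))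
    (hv : ∀ i, v i = c) : blockOp W v = v := by
  refine PiLp.ext fun i => ?_
  simp only [blockOp_apply, hv, ← Finset.sum_smul, hrow, one_smul]

lemma sum_blockOp {N : ℕ} (W : Matrix (Fin N) (Fin N) ℝ)
    (hcol : ∀ j, ∑ i, W i j = 1) (x : Blk N) :
    ∑ i, blockOp W x i = ∑ i, x i := by
  simp only [blockOp_apply]
  rw [Finset.sum_comm]
  simp only [← Finset.sum_smul, hcol, one_smul]

lemma norm_blockOp_le {N : ℕ} (W : Matrix (Fin N) (Fin N) ℝ)
    (hn : ∀ i j, 0 ≤ W i j) (hrow : ∀ i, ∑ j, W i j = 1) (hcol : ∀ j, ∑ i, W i j = 1)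
    (u : Blk N) : ‖blockOp W u‖ ≤ ‖u‖ := by
  rw [PiLp.norm_eq_of_L2, PiLp.norm_eq_of_L2]
  apply Real.sqrt_le_sqrt
  calc ∑ i, ‖blockOp W u i‖ ^ 2 ≤ ∑ i, ∑ j, W i j * ‖u j‖ ^ 2 := by
        apply Finset.sum_le_sum
        intro i _
        have h1 : ‖blockOp W u i‖ ≤ ∑ j, W i j * ‖u j‖ := by
          rw [blockOp_apply]
          refine (norm_sum_le _ _).trans (le_of_eq ?_)
          refine Finset.sum_congr rfl fun j _ => ?_
          rw [norm_smul, Real.norm_eq_abs, abs_of_nonneg (hn i j)]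
        have h2 : ‖blockOp W u i‖ ^ 2 ≤ (∑ j, W i j * ‖u j‖) ^ 2 := by
          apply pow_le_pow_left₀ (norm_nonneg _) h1
        refine h2.trans ?_
        have h3 := Finset.sum_mul_sq_le_sq_mul_sq Finset.univ
          (fun j => Real.sqrt (W i j)) (fun j => Real.sqrt (W i j) * ‖u j‖)
        calc (∑ j, W i j * ‖u j‖) ^ 2
            = (∑ j, Real.sqrt (W i j) * (Real.sqrt (W i j) * ‖u j‖)) ^ 2 := by
              congr 1
              refine Finset.sum_congr rfl fun j _ => ?_
              rw [← mul_assoc, Real.mul_self_sqrt (hn i j)]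
          _ ≤ (∑ j, Real.sqrt (W i j) ^ 2) * ∑ j, (Real.sqrt (W i j) * ‖u j‖) ^ 2 := h3
          _ = ∑ j, W i j * ‖u j‖ ^ 2 := by
              simp only [Real.sq_sqrt (hn i _), mul_pow, hrow i, one_mul]
    _ = ∑ j, ‖u j‖ ^ 2 := by
        rw [Finset.sum_comm]
        simp only [← Finset.sum_mul, hcol, one_mul]

/-- online tracking of the (stacked) Shapley value: the iterates of
`x^{k+1} = (1−α)(W^k ⊗ I_N)x^k + α m̂^k` satisfy
`limsup ‖x^k − Φ^k‖ ≤ δ/α + αR/(1 − (1−α)σ)`. -/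
theorem stmt_12 (N : ℕ)
    (α : ℝ) (hα0 : 0 < α) (hα1 : α < 1)
    (σ : ℝ) (hσ0 : 0 ≤ σ) (hσ1 : σ < 1)
    (W : ℕ → Matrix (Fin N) (Fin N) ℝ)
    (hsymm : ∀ k, (W k).IsSymm)
    (hnonneg : ∀ k i j, 0 ≤ W k i j)
    (hrow : ∀ k i, ∑ j, W k i j = 1)
    (hcol : ∀ k j, ∑ i, W k i j = 1)
    (hcontr : ∀ k, ∀ u : Blk N, ∑ i, u i = 0 → ‖blockOp (W k) u‖ ≤ σ * ‖u‖)
    (mh : ℕ → Blk N)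
    (Φ : ℕ → Blk N)
    (hΦ : ∀ k, Φ k = (WithLp.equiv 2 ((_ : Fin N) → EuclideanSpace ℝ (Fin N))).symm
      fun _ => (1 / (N : ℝ)) • ∑ i, mh k i)
    (M : ℕ → Blk N → Blk N)
    (hM : ∀ k x, M k x = (1 - α) • blockOp (W k) x + α • mh k)
    (zbar : ℕ → Blk N)
    (hzfix : ∀ k, M k (zbar k) = zbar k)
    (hzuniq : ∀ k y, M k y = y → y = zbar k)
    (δ R : ℝ) (hδ : 0 ≤ δ) (hR : 0 ≤ R)
    (hdrift : ∀ k, ‖zbar (k + 1) - zbar k‖ ≤ δ)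
    (hRbd : ∀ k, ‖mh k - Φ k‖ ≤ R)
    (x : ℕ → Blk N) (hx : ∀ k, x (k + 1) = M k (x k)) :
    Filter.atTop.limsup (fun k => ‖x k - Φ k‖) ≤ δ / α + α * R / (1 - (1 - α) * σ) := by
  have hden : 0 < 1 - (1 - α) * σ := by nlinarith
  have hα1' : (0:ℝ) ≤ 1 - α := by linarith
  -- degenerate case N = 0
  rcases Nat.eq_zero_or_pos N with hN | hN
  · subst hN
    have hzero : ∀ k, ‖x k - Φ k‖ = 0 := by
      intro k
      rw [PiLp.norm_eq_of_L2]
      simp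
    simp only [hzero]
    rw [Filter.limsup_const]
    positivity
  have hNR : (0:ℝ) < (N:ℝ) := by exact_mod_cast hN
  set B1 : ℝ := α * R / (1 - (1 - α) * σ) with hB1
  -- Φ is a constant block
  have hΦapp : ∀ k i, Φ k i = (1 / (N : ℝ)) • ∑ i, mh k i := by
    intro k i; rw [hΦ k]; rfl
  have hΦfix : ∀ k, blockOp (W k) (Φ k) = Φ k := fun k =>
    blockOp_of_const (W k) (hrow k) (Φ k) _ (hΦapp k)
  -- fixed point equation
  have hz : ∀ k, zbar k = (1 - α) • blockOp (W k) (zbar k) + α • mh k := by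
    intro k; conv_lhs => rw [← hzfix k, hM]
  -- sums
  have hsum_z : ∀ k, ∑ i, zbar k i = ∑ i, mh k i := by
    intro k
    have h := congrArg (fun v : Blk N => ∑ i, v i) (hz k)
    simp only [PiLp.add_apply, PiLp.smul_apply, Finset.sum_add_distrib,
      ← Finset.smul_sum, sum_blockOp (W k) (hcol k)] at h
    have h2 : α • ∑ i, zbar k i = α • ∑ i, mh k i := by
      have := h
      linear_combination (norm := module) this
    exact smul_right_injective _ (ne_of_gt hα0) h2
  have hΦsum : ∀ k, ∑ i, Φ k i = ∑ i, mh k i := by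
    intro k
    simp only [hΦapp k, Finset.sum_const, Finset.card_univ, Fintype.card_fin]
    rw [← Nat.cast_smul_eq_nsmul ℝ, smul_smul]
    rw [mul_one_div, div_self (ne_of_gt hNR), one_smul]
  have hsum0 : ∀ k, ∑ i, (zbar k - Φ k) i = 0 := by
    intro k
    simp only [PiLp.sub_apply, Finset.sum_sub_distrib, hsum_z, hΦsum, sub_self]
  -- fixed-point distance to Φ
  have hA : ∀ k, ‖zbar k - Φ k‖ ≤ B1 := by
    intro k
    have hkey : zbar k - Φ k
        = (1 - α) • blockOp (W k) (zbar k - Φ k) + α • (mh k - Φ k) := by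
      rw [blockOp_sub, hΦfix k]
      have := hz k
      linear_combination (norm := module) this
    have hnorm : ‖zbar k - Φ k‖ ≤ (1 - α) * (σ * ‖zbar k - Φ k‖) + α * R := by
      calc ‖zbar k - Φ k‖
          ≤ ‖(1 - α) • blockOp (W k) (zbar k - Φ k)‖ + ‖α • (mh k - Φ k)‖ := by
            have h := norm_add_le ((1 - α) • blockOp (W k) (zbar k - Φ k))
              (α • (mh k - Φ k))
            rw [← hkey] at h; exact h
        _ ≤ (1 - α) * (σ * ‖zbar k - Φ k‖) + α * R := by
            rw [norm_smul, norm_smul, Real.norm_eq_abs, Real.norm_eq_abs,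
              abs_of_nonneg hα1', abs_of_nonneg (le_of_lt hα0)]
            gcongr
            · exact hcontr k _ (hsum0 k)
            · exact hRbd k
    rw [hB1, le_div_iff₀ hden]
    nlinarith [norm_nonneg (zbar k - Φ k)]
  -- contraction recursion
  set e : ℕ → ℝ := fun k => ‖x k - zbar k‖ with he
  have hB : ∀ k, e (k + 1) ≤ (1 - α) * e k + δ := by
    intro k
    have key : x (k + 1) - zbar (k + 1)
        = (1 - α) • blockOp (W k) (x k - zbar k) - (zbar (k + 1) - zbar k) := by
      rw [blockOp_sub]
      have h1 : x (k + 1) = (1 - α) • blockOp (W k) (x k) + α • mh k := by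
        rw [hx k, hM]
      have h2 := hz k
      linear_combination (norm := module) h1 - h2
    calc e (k + 1) = ‖x (k + 1) - zbar (k + 1)‖ := rfl
      _ ≤ ‖(1 - α) • blockOp (W k) (x k - zbar k)‖ + ‖zbar (k + 1) - zbar k‖ := by
          rw [key]; exact norm_sub_le _ _
      _ ≤ (1 - α) * e k + δ := by
          rw [norm_smul, Real.norm_eq_abs, abs_of_nonneg hα1']
          gcongr
          · exact norm_blockOp_le (W k) (hnonneg k) (hrow k) (hcol k) _
          · exact hdrift k
  have hC : ∀ k, e k ≤ (1 - α) ^ k * e 0 + δ / α := by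
    intro k
    induction k with
    | zero => simp; positivity
    | succ k ih =>
      have h1 := hB k
      have h2 : (1 - α) * ((1 - α) ^ k * e 0 + δ / α) + δ
          = (1 - α) ^ (k + 1) * e 0 + δ / α := by
        field_simp
        ring
      calc e (k + 1) ≤ (1 - α) * e k + δ := h1
        _ ≤ (1 - α) * ((1 - α) ^ k * e 0 + δ / α) + δ := by nlinarith
        _ = (1 - α) ^ (k + 1) * e 0 + δ / α := h2
  -- pointwise bound
  have hle : ∀ k, ‖x k - Φ k‖ ≤ (1 - α) ^ k * e 0 + (δ / α + B1) := by
    intro k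
    calc ‖x k - Φ k‖ = ‖(x k - zbar k) + (zbar k - Φ k)‖ := by abel_nf
      _ ≤ ‖x k - zbar k‖ + ‖zbar k - Φ k‖ := norm_add_le _ _
      _ ≤ ((1 - α) ^ k * e 0 + δ / α) + B1 := add_le_add (hC k) (hA k)
      _ = (1 - α) ^ k * e 0 + (δ / α + B1) := by ring
  -- limsup
  have hg : Filter.Tendsto (fun k => (1 - α) ^ k * e 0 + (δ / α + B1))
      Filter.atTop (nhds (δ / α + B1)) := by
    have h0 : Filter.Tendsto (fun k : ℕ => (1 - α) ^ k * e 0) Filter.atTop (nhds 0) := by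
      have := (tendsto_pow_atTop_nhds_zero_of_lt_one hα1' (by linarith)).mul_const (e 0)
      simpa using this
    have := h0.add_const (δ / α + B1)
    simpa using this
  calc Filter.atTop.limsup (fun k => ‖x k - Φ k‖)
      ≤ Filter.atTop.limsup (fun k => (1 - α) ^ k * e 0 + (δ / α + B1)) :=
        Filter.limsup_le_limsup (Filter.Eventually.of_forall hle)
          (Filter.isCoboundedUnder_le_of_le _ fun k => norm_nonneg _)
          hg.isBoundedUnder_le
    _ = δ / α + B1 := hg.limsup_eq
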